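/- arXiv:2304.14558 — 2 statements merged into one kernel-verified Lean document; each statement's English description precedes it below -/
import Mathlib

section
/- If R is a normalized transfer operator for σ acting on L²(μ), then μ is strongly invariant with respect to (R, σ) — i.e. μ is σ-invariant and μR = μ — if and only if the adjoint satisfies R*(𝟙) = 𝟙. -/
open MeasureTheory
open scoped ENNReal

/-! With `u = R*𝟙`, duality gives `∫ R f dμ = ∫ f u dμ`. Hence `μR = μ` says exactly that `u dμ`
and `μ` agree on every set, i.e. `u = 1` a.e. The σ-invariance is then automatic: by the pull-out
property and `R 𝟙 = 𝟙`, `R (𝟙_A ∘ σ) = 𝟙_A`, so `μR = μ` tested on `𝟙_{σ⁻¹A}` gives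
`μ (σ⁻¹ A) = μ A`. -/

section
variable {X : Type*} [MeasurableSpace X] {μ : Measure X}

theorem ae_eq_one_of_setIntegral_eq_measureReal [SigmaFinite μ] {u : X → ℝ}
    (h : ∀ s, MeasurableSet s → μ s < ∞ → ∫ x in s, u x ∂μ = μ.real s) :
    u =ᵐ[μ] fun _ => 1 := by
  refine ae_eq_of_forall_setIntegral_eq_of_sigmaFinite (fun s hs hμs => ?_)
    (fun s _ hμs => integrableOn_const hμs.ne) (fun s hs hμs => by simp [h s hs hμs])
  by_cases hμs0 : μ s = 0
  · simp [IntegrableOn, Measure.restrict_eq_zero.mpr hμs0]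
  · refine Integrable.of_integral_ne_zero ?_
    rwa [h s hs hμs, measureReal_ne_zero_iff hμs.ne]

theorem integral_indicator_one_mul {s : Set X} (hs : MeasurableSet s) (u : X → ℝ) :
    ∫ x, s.indicator 1 x * u x ∂μ = ∫ x in s, u x ∂μ := by
  rw [← integral_indicator hs]
  congr 1 with x
  by_cases hx : x ∈ s <;> simp [hx]

theorem map_eq_self_of_forall_integral_transfer_eq [IsFiniteMeasure μ] {σ : X → X}
    (hσ : Measurable σ) {R : (X → ℝ) → (X → ℝ)}
    (hpull : ∀ f g : X → ℝ, R (fun x => f (σ x) * g x) = fun x => f x * R g x)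
    (hnorm : R (fun _ => 1) = fun _ => 1) {p : ℝ≥0∞}
    (h : ∀ f : X → ℝ, MemLp f p μ → ∫ x, R f x ∂μ = ∫ x, f x ∂μ) :
    μ.map σ = μ := by
  ext A hA
  have hRA : R ((σ ⁻¹' A).indicator 1) = A.indicator 1 := by
    simpa only [hnorm, mul_one, ← Set.indicator_comp_right, Pi.one_comp] using
      hpull (A.indicator 1) fun _ => 1
  have hA_int := h ((σ ⁻¹' A).indicator 1)
    (memLp_indicator_const p (hσ hA) 1 (.inr (measure_ne_top μ _)))
  rw [hRA, integral_indicator_one hA, integral_indicator_one (hσ hA)] at hA_int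
  rw [Measure.map_apply hσ hA, ← measureReal_eq_measureReal_iff, hA_int]

end

theorem strongly_invariant_iff_adjoint_one_general {X : Type*} [MeasurableSpace X]
    (μ : Measure X) [IsProbabilityMeasure μ] (σ : X → X) (hσ : Measurable σ)
    (R : (X → ℝ) →ₗ[ℝ] (X → ℝ))
    (hpull : ∀ f g : X → ℝ, R (fun x => f (σ x) * g x) = fun x => f x * R g x)
    (hnorm : R (fun _ => (1 : ℝ)) = fun _ => (1 : ℝ))
    (Rstar : (X → ℝ) → (X → ℝ))
    (hadj : ∀ f g : X → ℝ, MemLp f 2 μ → MemLp g 2 μ →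
      ∫ x, R f x * g x ∂μ = ∫ x, f x * Rstar g x ∂μ) :
    (μ.map σ = μ ∧ ∀ f : X → ℝ, MemLp f 2 μ → ∫ x, R f x ∂μ = ∫ x, f x ∂μ) ↔
      Rstar (fun _ => (1 : ℝ)) =ᵐ[μ] fun _ => (1 : ℝ) := by
  set u := Rstar fun _ => (1 : ℝ)
  have hR : ∀ f : X → ℝ, MemLp f 2 μ → ∫ x, R f x ∂μ = ∫ x, f x * u x ∂μ := fun f hf => by
    simpa using hadj f _ hf (memLp_const 1)
  constructor
  · rintro ⟨-, hμR⟩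
    refine ae_eq_one_of_setIntegral_eq_measureReal fun s hs _ => ?_
    have hs2 : MemLp (s.indicator (1 : X → ℝ)) 2 μ :=
      memLp_indicator_const 2 hs 1 (.inr (measure_ne_top μ s))
    rw [← integral_indicator_one_mul hs, ← hR _ hs2, hμR _ hs2, integral_indicator_one hs]
  · intro hu
    have hμR : ∀ f : X → ℝ, MemLp f 2 μ → ∫ x, R f x ∂μ = ∫ x, f x ∂μ := fun f hf => by
      rw [hR f hf]
      exact integral_congr_ae (hu.mono fun x hx => by simp [hx])
    exact ⟨map_eq_self_of_forall_integral_transfer_eq hσ hpull hnorm hμR, hμR⟩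

/-- For a normalized transfer operator R acting on L²(μ), the measure μ is
    strongly invariant (σ-invariant and μR = μ) iff R*(𝟙) = 𝟙. -/
theorem strongly_invariant_iff_adjoint_one {X : Type*} [MeasurableSpace X]
    (μ : Measure X) [IsProbabilityMeasure μ] (σ : X → X) (hσ : Measurable σ)
    (R : (X → ℝ) →ₗ[ℝ] (X → ℝ))
    (hpos : ∀ f : X → ℝ, 0 ≤ f → 0 ≤ R f)
    (hpull : ∀ f g : X → ℝ, R (fun x => f (σ x) * g x) = fun x => f x * R g x)
    (hnorm : R (fun _ => (1 : ℝ)) = fun _ => (1 : ℝ))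
    (hL2 : ∀ f : X → ℝ, MemLp f 2 μ → MemLp (R f) 2 μ)
    (Rstar : (X → ℝ) → (X → ℝ))
    (hadj : ∀ f g : X → ℝ, MemLp f 2 μ → MemLp g 2 μ →
      ∫ x, R f x * g x ∂μ = ∫ x, f x * Rstar g x ∂μ) :
    (μ.map σ = μ ∧ ∀ f : X → ℝ, MemLp f 2 μ → ∫ x, R f x ∂μ = ∫ x, f x ∂μ) ↔
      Rstar (fun _ => (1 : ℝ)) =ᵐ[μ] fun _ => (1 : ℝ) :=
  strongly_invariant_iff_adjoint_one_general μ σ hσ R hpull hnorm Rstar hadj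
end

section
/- Let φ ≥ 0 be Markovian for (σ, μ) and m measurable with m√φ·(f∘σ) ∈ L²(μ) for f ∈ L²(μ). Then T_m(f) = m√φ(f∘σ) is an isometry on L²(μ) if and only if S_φ*(√φ · |m|²) = 𝟙, where S_φ(f) = √φ(f∘σ) and S_φ* is its adjoint. -/
/-!
Since `‖a • (f ∘ σ)‖_{L^p(μ)} = ‖f‖_{L^p(ν)}` for the pushforward `ν = σ_*(|a|^p μ)`, the weighted
composition operator `f ↦ a • (f ∘ σ)` is an isometry of `L^p(μ)` exactly when `ν = μ` (test on
indicators). For `a = m √φ` and `p = 2`, pairing the adjoint relation with indicators gives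
`∫_A S_φ*(√φ |m|²) dμ = ν(A)`: the function `S_φ*(√φ |m|²)` is the density of `ν` with respect to
`μ`, so `ν = μ` if and only if it equals `1` almost everywhere.
-/

open MeasureTheory
open scoped ENNReal ComplexConjugate

section WeightedComposition

variable {X 𝕜 E : Type*} [MeasurableSpace X] [NormedField 𝕜] [NormedAddCommGroup E]
  [NormedSpace 𝕜 E] {μ : Measure X} {σ : X → X} {a : X → 𝕜} {p : ℝ≥0∞}

lemma eLpNorm_withDensity_enorm_rpow (hp₀ : p ≠ 0) (hp_top : p ≠ ∞)
    (ha : AEStronglyMeasurable a μ) {g : X → E}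
    (hg : AEStronglyMeasurable g (μ.withDensity fun x => ‖a x‖ₑ ^ p.toReal)) :
    eLpNorm g p (μ.withDensity fun x => ‖a x‖ₑ ^ p.toReal) = eLpNorm (fun x => a x • g x) p μ := by
  rw [eLpNorm_eq_lintegral_rpow_enorm_toReal hp₀ hp_top,
    eLpNorm_eq_lintegral_rpow_enorm_toReal hp₀ hp_top,
    lintegral_withDensity_eq_lintegral_mul₀' (ha.enorm.pow_const _) (hg.enorm.pow_const _)]
  simp only [Pi.mul_apply, enorm_smul, ENNReal.mul_rpow_of_nonneg _ _ ENNReal.toReal_nonneg]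

lemma eLpNorm_smul_comp (hp₀ : p ≠ 0) (hp_top : p ≠ ∞) (hσ : Measurable σ)
    (ha : AEStronglyMeasurable a μ) {f : X → E}
    (hf : AEStronglyMeasurable f ((μ.withDensity fun x => ‖a x‖ₑ ^ p.toReal).map σ)) :
    eLpNorm (fun x => a x • f (σ x)) p μ
      = eLpNorm f p ((μ.withDensity fun x => ‖a x‖ₑ ^ p.toReal).map σ) := by
  rw [eLpNorm_map_measure hf hσ.aemeasurable,
    eLpNorm_withDensity_enorm_rpow hp₀ hp_top ha (hf.comp_measurable hσ)]
  rfl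

theorem eLpNorm_smul_comp_eq_iff_map_withDensity_eq [IsFiniteMeasure μ] [Nontrivial E]
    (hp₀ : p ≠ 0) (hp_top : p ≠ ∞) (hσ : Measurable σ) (ha : AEStronglyMeasurable a μ) :
    (∀ f : X → E, MemLp f p μ → eLpNorm (fun x => a x • f (σ x)) p μ = eLpNorm f p μ) ↔
      (μ.withDensity fun x => ‖a x‖ₑ ^ p.toReal).map σ = μ := by
  refine ⟨fun h => ?_, fun h f hf => ?_⟩
  · ext A hA
    obtain ⟨c, hc⟩ := exists_ne (0 : E)
    have hA_norm := h (A.indicator fun _ => c)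
      (memLp_indicator_const p hA c (.inr (by finiteness)))
    rw [eLpNorm_smul_comp hp₀ hp_top hσ ha (aestronglyMeasurable_const.indicator hA),
      eLpNorm_indicator_const hA hp₀ hp_top, eLpNorm_indicator_const hA hp₀ hp_top,
      ENNReal.mul_right_inj (enorm_ne_zero.2 hc) enorm_ne_top] at hA_norm
    exact ENNReal.rpow_left_injective (by simp [ENNReal.toReal_eq_zero_iff, hp₀, hp_top]) hA_norm
  · rw [eLpNorm_smul_comp hp₀ hp_top hσ ha (by rw [h]; exact hf.1), h]

end WeightedComposition

section Density

variable {X E : Type*} [MeasurableSpace X] [NormedAddCommGroup E] {μ : Measure X}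
  {a : X → E} {p : ℝ≥0∞}

lemma isFiniteMeasure_withDensity_enorm_rpow (hp₀ : p ≠ 0) (hp_top : p ≠ ∞) (ha : MemLp a p μ) :
    IsFiniteMeasure (μ.withDensity fun x => ‖a x‖ₑ ^ p.toReal) :=
  isFiniteMeasure_withDensity (lintegral_rpow_enorm_lt_top_of_eLpNorm_lt_top hp₀ hp_top ha.2).ne

lemma measureReal_withDensity_enorm_rpow (hp₀ : p ≠ 0) (hp_top : p ≠ ∞) (ha : MemLp a p μ)
    {B : Set X} (hB : MeasurableSet B) :
    (μ.withDensity fun x => ‖a x‖ₑ ^ p.toReal).real B = ∫ x in B, ‖a x‖ ^ p.toReal ∂μ := by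
  rw [measureReal_def, withDensity_apply _ hB, integral_eq_lintegral_of_nonneg_ae
    (.of_forall fun x => by positivity) (ha.integrable_norm_rpow hp₀ hp_top).1.restrict]
  congr 1
  refine lintegral_congr fun x => ?_
  rw [← ofReal_norm, ENNReal.ofReal_rpow_of_nonneg (norm_nonneg _) ENNReal.toReal_nonneg]

lemma memLp_two_ofReal_sqrt {φ : X → ℝ} (hφ : Integrable φ μ) (hφ_nonneg : 0 ≤ φ) :
    MemLp (fun x => (√(φ x) : ℂ)) 2 μ := by
  refine (memLp_two_iff_integrable_sq_norm ?_).2 <| hφ.congr <| .of_forall fun x => ?_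
  · exact Complex.continuous_ofReal.comp_aestronglyMeasurable
      (Real.continuous_sqrt.comp_aestronglyMeasurable hφ.1)
  · simp [Real.sq_sqrt (hφ_nonneg x)]

theorem MeasureTheory.Measure.eq_iff_ae_eq_one_of_setIntegral {𝕜 : Type*} [RCLike 𝕜]
    {ν : Measure X} [IsFiniteMeasure ν] [IsFiniteMeasure μ] {g : X → 𝕜} (hg : Integrable g μ)
    (hgν : ∀ A, MeasurableSet A → ∫ x in A, g x ∂μ = ν.real A) :
    ν = μ ↔ g =ᵐ[μ] fun _ => 1 := by
  have setIntegral_one (A : Set X) : ∫ _ in A, (1 : 𝕜) ∂μ = μ.real A := by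
    simp [RCLike.real_smul_eq_coe_mul]
  refine ⟨fun hνμ => ?_, fun hg_one => ?_⟩
  · subst hνμ
    exact hg.ae_eq_of_forall_setIntegral_eq _ _ (integrable_const 1)
      fun A hA _ => by rw [hgν A hA, setIntegral_one]
  · ext A hA
    have hA_real : ν.real A = μ.real A := by
      rw [← RCLike.ofReal_inj (K := 𝕜), ← hgν A hA,
        setIntegral_congr_ae hA (hg_one.mono fun x hx _ => hx), setIntegral_one]
    rwa [measureReal_def, measureReal_def,
      ENNReal.toReal_eq_toReal_iff' (by finiteness) (by finiteness)] at hA_real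

lemma setIntegral_eq_measureReal_map_withDensity [IsFiniteMeasure μ] {σ : X → X}
    (hσ : Measurable σ) {a b g h : X → ℂ} (ha : MemLp a 2 μ)
    (hgb : ∀ x, conj (g x) * b x = ‖a x‖ ^ 2)
    (hadj : ∀ f, MemLp f 2 μ →
      ∫ x, conj (g x) * (b x * f (σ x)) ∂μ = ∫ x, conj (h x) * f x ∂μ)
    {A : Set X} (hA : MeasurableSet A) :
    ∫ x in A, h x ∂μ = ((μ.withDensity fun x => ‖a x‖ₑ ^ (2 : ℝ≥0∞).toReal).map σ).real A := by
  have hA_adj := hadj (A.indicator 1) (memLp_indicator_const 2 hA 1 (.inr (by finiteness)))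
  have hL : (fun x => conj (g x) * (b x * A.indicator 1 (σ x)))
      = (σ ⁻¹' A).indicator fun x => ((‖a x‖ ^ (2 : ℝ≥0∞).toReal : ℝ) : ℂ) := by
    ext x
    by_cases hx : σ x ∈ A <;> simp [hx, hgb]
  have hR : (fun x => conj (h x) * A.indicator 1 x) = A.indicator fun x => conj (h x) := by
    ext x
    by_cases hx : x ∈ A <;> simp [hx]
  rw [hL, hR, integral_indicator (hσ hA), integral_indicator hA, integral_complex_ofReal] at hA_adj
  rw [map_measureReal_apply hσ hA, measureReal_withDensity_enorm_rpow two_ne_zero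
    ENNReal.ofNat_ne_top ha (hσ hA), ← Complex.conj_ofReal, hA_adj, integral_conj,
    RCLike.conj_conj]

end Density

theorem weighted_composition_isometry_iff_general {X : Type*} [MeasurableSpace X]
    (μ : Measure X) [IsProbabilityMeasure μ] (σ : X → X) (hσ : Measurable σ)
    (φ : X → ℝ) (hφmeas : Measurable φ) (hφpos : 0 ≤ φ)
    (hmark : ∀ f : X → ℝ, Integrable f μ →
      ∫ x, f (σ x) * φ x ∂μ = ∫ x, f x ∂μ)
    (Sstar : (X → ℂ) → (X → ℂ))
    (hSstar : ∀ g : X → ℂ, MemLp g 2 μ → MemLp (Sstar g) 2 μ)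
    (hadj : ∀ f g : X → ℂ, MemLp f 2 μ → MemLp g 2 μ →
      ∫ x, (starRingEnd ℂ) (g x) * ((Real.sqrt (φ x) : ℂ) * f (σ x)) ∂μ
        = ∫ x, (starRingEnd ℂ) (Sstar g x) * f x ∂μ)
    (m : X → ℂ) (hm : Measurable m) (hmbd : ∃ C, ∀ x, ‖m x‖ ≤ C) :
    (∀ f : X → ℂ, MemLp f 2 μ →
        eLpNorm (fun x => m x * (Real.sqrt (φ x) : ℂ) * f (σ x)) 2 μ
          = eLpNorm f 2 μ) ↔
      Sstar (fun x => ((Real.sqrt (φ x) * ‖m x‖ ^ 2 : ℝ) : ℂ))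
        =ᵐ[μ] fun _ => (1 : ℂ) := by
  obtain ⟨C, hC⟩ := hmbd
  set a : X → ℂ := fun x => m x * (Real.sqrt (φ x) : ℂ)
  set G : X → ℂ := fun x => ((Real.sqrt (φ x) * ‖m x‖ ^ 2 : ℝ) : ℂ)
  have hφ : Integrable φ μ := .of_integral_ne_zero <| by
    simpa using (hmark (fun _ => 1) (integrable_const 1)).trans_ne (by simp)
  have ha : MemLp a 2 μ := (memLp_two_ofReal_sqrt hφ hφpos).of_le_mul (c := C) (by fun_prop) <| .of_forall fun x => by
    simpa only [a, norm_mul] using mul_le_mul_of_nonneg_right (hC x) (norm_nonneg _)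
  have hG : MemLp G 2 μ := ha.of_le_mul (c := C) (by fun_prop) <| .of_forall fun x => by
    have hGa : ‖G x‖ = ‖m x‖ * ‖a x‖ := by
      have hG_nonneg : 0 ≤ √(φ x) * ‖m x‖ ^ 2 := by positivity
      simp only [G, a, norm_mul, Complex.norm_real, Real.norm_of_nonneg hG_nonneg,
        Real.norm_of_nonneg (Real.sqrt_nonneg _)]
      ring
    rw [hGa]
    exact mul_le_mul_of_nonneg_right (hC x) (norm_nonneg _)
  have hGb (x : X) : conj (G x) * (Real.sqrt (φ x) : ℂ) = ‖a x‖ ^ 2 := by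
    simp only [G, a, Complex.ofReal_mul, Complex.ofReal_pow, map_mul, map_pow, Complex.conj_ofReal,
      Complex.norm_mul, Complex.norm_real, Real.norm_eq_abs, abs_of_nonneg (Real.sqrt_nonneg _),
      mul_pow]
    ring
  have := isFiniteMeasure_withDensity_enorm_rpow two_ne_zero ENNReal.ofNat_ne_top ha
  exact (eLpNorm_smul_comp_eq_iff_map_withDensity_eq two_ne_zero ENNReal.ofNat_ne_top hσ ha.1).trans
    (Measure.eq_iff_ae_eq_one_of_setIntegral ((hSstar G hG).integrable one_le_two)
      fun A hA => setIntegral_eq_measureReal_map_withDensity hσ ha hGb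
        (fun f hf => hadj f G hf hG) hA)

/-- T_m(f) = m√φ(f∘σ) is an isometry on L²(μ) iff S_φ*(√φ·|m|²) = 𝟙. -/
theorem weighted_composition_isometry_iff {X : Type*} [MeasurableSpace X]
    (μ : Measure X) [IsProbabilityMeasure μ] (σ : X → X) (hσ : Measurable σ)
    (hsurj : Function.Surjective σ)
    (φ : X → ℝ) (hφmeas : Measurable φ) (hφpos : 0 ≤ φ)
    (hmark : ∀ f : X → ℝ, Integrable f μ →
      ∫ x, f (σ x) * φ x ∂μ = ∫ x, f x ∂μ)
    (Sstar : (X → ℂ) → (X → ℂ))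
    (hSstar : ∀ g : X → ℂ, MemLp g 2 μ → MemLp (Sstar g) 2 μ)
    (hadj : ∀ f g : X → ℂ, MemLp f 2 μ → MemLp g 2 μ →
      ∫ x, (starRingEnd ℂ) (g x) * ((Real.sqrt (φ x) : ℂ) * f (σ x)) ∂μ
        = ∫ x, (starRingEnd ℂ) (Sstar g x) * f x ∂μ)
    (m : X → ℂ) (hm : Measurable m) (hmbd : ∃ C, ∀ x, ‖m x‖ ≤ C) :
    (∀ f : X → ℂ, MemLp f 2 μ →
        eLpNorm (fun x => m x * (Real.sqrt (φ x) : ℂ) * f (σ x)) 2 μ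
          = eLpNorm f 2 μ) ↔
      Sstar (fun x => ((Real.sqrt (φ x) * ‖m x‖ ^ 2 : ℝ) : ℂ))
        =ᵐ[μ] fun _ => (1 : ℂ) :=
  weighted_composition_isometry_iff_general μ σ hσ φ hφmeas hφpos hmark Sstar hSstar hadj m hm hmbd
end
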